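/- For a one-dimensional Ornstein–Uhlenbeck signal dX_t = aX_t dt + σ dW_t with X_0 ~ N(m₀, p₀), the conditional law of X_t given a linear Gaussian observation filtration is Gaussian, and the conditional variance P_t satisfies the scalar Riccati ODE dP_t/dt = 2aP_t - s P_t² + σ² with s = c²/r₂ ≥ 0; if a < 0 and P_0 ≥ 0 then P_t ≥ 0 for all t ≥ 0 and P_t is bounded: P_t ≤ max(P_0, P_∞) where P_∞ is the nonnegative root of 2ap - sp² + σ² = 0 (when s > 0). -/

import Mathlib

/-!
The right-hand side `F p = 2ap - sp² + σ²` of the Riccati equation is positive at `p = 0` and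
negative beyond its larger root `P∞`. So a solution can neither cross `0` downwards nor cross any
level above `P∞` upwards, which gives `0 ≤ P t ≤ max (P 0) P∞`.
-/

open Filter Topology

section Autonomous

variable {f F : ℝ → ℝ} {t₀ : ℝ}

theorem le_of_hasDerivAt_autonomous_of_neg (hf : ∀ t, t₀ ≤ t → HasDerivAt f (F (f t)) t)
    {p : ℝ} (hFp : F p < 0) (h₀ : f t₀ ≤ p) {t : ℝ} (ht : t₀ ≤ t) : f t ≤ p :=
  image_le_of_deriv_right_lt_deriv_boundary (B := fun _ ↦ p) (B' := 0)
    (fun x hx ↦ (hf x hx.1).continuousAt.continuousWithinAt)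
    (fun x hx ↦ (hf x hx.1).hasDerivWithinAt) h₀ (fun _ ↦ hasDerivAt_const _ _)
    (fun x _ hx ↦ by simpa [hx] using hFp) ⟨ht, le_rfl⟩

/-- `F M` itself may vanish, so the strict barrier is applied at every level just above `M`. -/
theorem le_of_hasDerivAt_autonomous (hf : ∀ t, t₀ ≤ t → HasDerivAt f (F (f t)) t)
    {M : ℝ} (hF : ∀ᶠ p in 𝓝[>] M, F p < 0) (h₀ : f t₀ ≤ M) {t : ℝ} (ht : t₀ ≤ t) : f t ≤ M :=
  ge_of_tendsto (tendsto_id.mono_left nhdsWithin_le_nhds) <|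
    (hF.and self_mem_nhdsWithin).mono fun _ ⟨hFp, hMp⟩ ↦
      le_of_hasDerivAt_autonomous_of_neg hf hFp (h₀.trans hMp.le) ht

theorem ge_of_hasDerivAt_autonomous (hf : ∀ t, t₀ ≤ t → HasDerivAt f (F (f t)) t)
    {m : ℝ} (hF : ∀ᶠ p in 𝓝[<] m, 0 < F p) (h₀ : m ≤ f t₀) {t : ℝ} (ht : t₀ ≤ t) : m ≤ f t := by
  have hneg : ∀ t, t₀ ≤ t → HasDerivAt (-f) ((fun p ↦ -F (-p)) ((-f) t)) t := fun t ht ↦ by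
    simpa using (hf t ht).neg
  have hF' : ∀ᶠ p in 𝓝[>] (-m), -F (-p) < 0 :=
    tendsto_neg_nhdsGT_neg.eventually (hF.mono fun _ h ↦ neg_neg_of_pos h)
  have h₀' : (-f) t₀ ≤ -m := neg_le_neg h₀
  simpa using le_of_hasDerivAt_autonomous hneg hF' h₀' ht

end Autonomous

theorem riccati_neg_of_gt {a s σ p : ℝ} (hs : 0 < s)
    (hp : (a + √(a ^ 2 + s * σ ^ 2)) / s < p) : 2 * a * p - s * p ^ 2 + σ ^ 2 < 0 := by
  have hq : √(a ^ 2 + s * σ ^ 2) < s * p - a := by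
    rw [div_lt_iff₀ hs] at hp
    linarith
  have hsq : a ^ 2 + s * σ ^ 2 < (s * p - a) ^ 2 :=
    (Real.sqrt_lt' ((Real.sqrt_nonneg _).trans_lt hq)).mp hq
  nlinarith

theorem scalar_riccati_bounded_general (a σ c r₂ : ℝ) (hσ : 0 < σ)
    (hr₂ : 0 < r₂) (hc : c ≠ 0) (P : ℝ → ℝ)
    (hP : ∀ t : ℝ, 0 ≤ t →
      HasDerivAt P (2 * a * P t - (c ^ 2 / r₂) * (P t) ^ 2 + σ ^ 2) t)
    (hP0 : 0 ≤ P 0) :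
    ∀ t : ℝ, 0 ≤ t →
      0 ≤ P t ∧
        P t ≤ max (P 0)
          ((a + Real.sqrt (a ^ 2 + (c ^ 2 / r₂) * σ ^ 2)) / (c ^ 2 / r₂)) := by
  set s := c ^ 2 / r₂
  have hs : 0 < s := by positivity
  set F : ℝ → ℝ := fun p ↦ 2 * a * p - s * p ^ 2 + σ ^ 2
  have hPF : ∀ t, 0 ≤ t → HasDerivAt P (F (P t)) t := hP
  have hF_pos : ∀ᶠ p in 𝓝[<] 0, 0 < F p := by
    have hF : Continuous F := by fun_prop
    have hF0 : 0 < F 0 := by simpa [F] using pow_pos hσ 2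
    exact (continuousAt_const.eventually_lt hF.continuousAt hF0).filter_mono nhdsWithin_le_nhds
  have hF_neg : ∀ᶠ p in 𝓝[>] max (P 0) ((a + √(a ^ 2 + s * σ ^ 2)) / s), F p < 0 :=
    eventually_nhdsWithin_of_forall fun _ hp ↦ riccati_neg_of_gt hs ((le_max_right _ _).trans_lt hp)
  intro t ht
  exact ⟨ge_of_hasDerivAt_autonomous hPF hF_pos hP0 ht,
    le_of_hasDerivAt_autonomous hPF hF_neg (le_max_left _ _) ht⟩

/-- Boundedness of the scalar Kalman–Bucy Riccati equation
`dP/dt = 2aP - sP² + σ²`, `s = c²/r₂ > 0`: if `a < 0` and `P 0 ≥ 0`, then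
`0 ≤ P t ≤ max (P 0) P∞` for all `t ≥ 0`, where `P∞` is the nonnegative root
of `2ap - sp² + σ² = 0`. -/
theorem scalar_riccati_bounded (a σ c r₂ : ℝ) (ha : a < 0) (hσ : 0 < σ)
    (hr₂ : 0 < r₂) (hc : c ≠ 0) (P : ℝ → ℝ)
    (hP : ∀ t : ℝ, 0 ≤ t →
      HasDerivAt P (2 * a * P t - (c ^ 2 / r₂) * (P t) ^ 2 + σ ^ 2) t)
    (hP0 : 0 ≤ P 0) :
    ∀ t : ℝ, 0 ≤ t →
      0 ≤ P t ∧
        P t ≤ max (P 0)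
          ((a + Real.sqrt (a ^ 2 + (c ^ 2 / r₂) * σ ^ 2)) / (c ^ 2 / r₂)) :=
  scalar_riccati_bounded_general a σ c r₂ hσ hr₂ hc P hP hP0
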